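/- arXiv:1312.6233 — 6 statements merged into one kernel-verified Lean document; each statement's English description precedes it below -/
import Mathlib

section
/- Let p₀, p₁, p∞ be integers with 2 ≤ p₀ ≤ p₁ ≤ p∞. Then 1/p₀ + 1/p₁ + 1/p∞ < 1 and (1 − 1/p₀ − 1/p₁)·p∞ ≤ 2 hold (as rational inequalities) if and only if (p₀, p₁, p∞) is one of the following 18 triples: (2,3,7), (2,3,8), (2,3,9), (2,3,10), (2,3,11), (2,3,12), (2,4,5), (2,4,6), (2,4,7), (2,4,8), (2,5,5), (2,5,6), (2,6,6), (3,3,4), (3,3,5), (3,3,6), (3,4,4), (4,4,4). -/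
/-! The condition `(1 - 1/p₀ - 1/p₁) p∞ ≤ 2` bounds `p∞` once the defect `1 - 1/p₀ - 1/p₁`
is bounded below. Hyperbolicity excludes `p₀ = p₁ = 2`, so `p₁ ≥ 3`, and then the defect is at
least `1 - 1/2 - 1/3 = 1/6`; hence `p∞ ≤ 12` and only finitely many triples remain to be checked. -/

lemma three_le_of_one_div_add_one_div_add_one_div_lt_one {a b c : ℤ} (ha : 2 ≤ a) (hab : a ≤ b)
    (hc : 0 < c) (h : 1 / (a : ℚ) + 1 / b + 1 / c < 1) : 3 ≤ b := by
  by_contra! hb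
  obtain rfl : b = 2 := by omega
  obtain rfl : a = 2 := by omega
  have : (0 : ℚ) < 1 / c := by positivity
  norm_num at h
  linarith

lemma one_sixth_le_one_sub_one_div_sub_one_div {a b : ℤ} (ha : 2 ≤ a) (hab : a ≤ b) (hb : 3 ≤ b) :
    1 / 6 ≤ 1 - 1 / (a : ℚ) - 1 / b := by
  have hb' : 1 / (b : ℚ) ≤ 1 / 3 := one_div_le_one_div_of_le (by norm_num) (by exact_mod_cast hb)
  rcases ha.eq_or_lt with rfl | ha
  · push_cast
    linarith
  · have ha' : 1 / (a : ℚ) ≤ 1 / 3 := one_div_le_one_div_of_le (by norm_num) (by exact_mod_cast ha)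
    linarith

lemma le_twelve_of_one_sixth_le {K : Type*} [Field K] [LinearOrder K] [IsStrictOrderedRing K]
    {d c : K} (hd : 1 / 6 ≤ d) (hc : 0 ≤ c) (h : d * c ≤ 2) : c ≤ 12 := by
  nlinarith

/-- Enumeration after Proposition 2: the ordered triples `2 ≤ p₀ ≤ p₁ ≤ p∞` satisfying
hyperbolicity `1/p₀ + 1/p₁ + 1/p∞ < 1` and `(1 - 1/p₀ - 1/p₁) * p∞ ≤ 2` are exactly the
18 listed triples. -/
theorem stmt2 (p₀ p₁ p_inf : ℤ) (h0 : 2 ≤ p₀) (h01 : p₀ ≤ p₁) (h1inf : p₁ ≤ p_inf) :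
    (1/(p₀:ℚ) + 1/(p₁:ℚ) + 1/(p_inf:ℚ) < 1 ∧
      (1 - 1/(p₀:ℚ) - 1/(p₁:ℚ)) * (p_inf:ℚ) ≤ 2) ↔
    ((p₀, p₁, p_inf) = (2, 3, 7) ∨ (p₀, p₁, p_inf) = (2, 3, 8) ∨
     (p₀, p₁, p_inf) = (2, 3, 9) ∨ (p₀, p₁, p_inf) = (2, 3, 10) ∨
     (p₀, p₁, p_inf) = (2, 3, 11) ∨ (p₀, p₁, p_inf) = (2, 3, 12) ∨
     (p₀, p₁, p_inf) = (2, 4, 5) ∨ (p₀, p₁, p_inf) = (2, 4, 6) ∨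
     (p₀, p₁, p_inf) = (2, 4, 7) ∨ (p₀, p₁, p_inf) = (2, 4, 8) ∨
     (p₀, p₁, p_inf) = (2, 5, 5) ∨ (p₀, p₁, p_inf) = (2, 5, 6) ∨
     (p₀, p₁, p_inf) = (2, 6, 6) ∨ (p₀, p₁, p_inf) = (3, 3, 4) ∨
     (p₀, p₁, p_inf) = (3, 3, 5) ∨ (p₀, p₁, p_inf) = (3, 3, 6) ∨
     (p₀, p₁, p_inf) = (3, 4, 4) ∨ (p₀, p₁, p_inf) = (4, 4, 4)) := by
  constructor
  · rintro ⟨hhyp, hbound⟩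
    have hp₁ : 3 ≤ p₁ :=
      three_le_of_one_div_add_one_div_add_one_div_lt_one h0 h01 (by omega) hhyp
    have hp_inf : (p_inf : ℚ) ≤ 12 :=
      le_twelve_of_one_sixth_le (one_sixth_le_one_sub_one_div_sub_one_div h0 h01 hp₁)
        (by exact_mod_cast (by omega : (0 : ℤ) ≤ p_inf)) hbound
    have : p_inf ≤ 12 := by exact_mod_cast hp_inf
    have : p₀ ≤ 12 := by omega
    have : p₁ ≤ 12 := by omega
    revert hhyp hbound
    interval_cases p₀ <;> interval_cases p₁ <;> interval_cases p_inf <;> norm_num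
  · rintro (h|h|h|h|h|h|h|h|h|h|h|h|h|h|h|h|h|h) <;>
      (simp only [Prod.mk.injEq] at h; obtain ⟨rfl, rfl, rfl⟩ := h; norm_num)
end

section
/- Let p₀, p₁, p∞, d be integers with 2 ≤ p₀ ≤ p₁ ≤ p∞ and d ≥ 1. Then the conditions: 1/p₀ + 1/p₁ + 1/p∞ < 1, p₀ divides d, p₁ divides d, p∞ divides d, and (1 − 1/p₀ − 1/p₁ − 1/p∞)·d = 1 (as rational numbers), hold if and only if (p₀, p₁, p∞, d) is one of the following twelve quadruples: (2,3,7,42), (2,3,8,24), (2,3,9,18), (2,3,12,12), (2,4,5,20), (2,4,6,12), (2,4,8,8), (2,5,5,10), (2,6,6,6), (3,3,4,12), (3,3,6,6), (4,4,4,4). -/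
set_option maxHeartbeats 1000000


/-- Table 1 of the paper (hypergeometric case): for integers `2 ≤ p₀ ≤ p₁ ≤ p∞` and `d ≥ 1`,
hyperbolicity, divisibility of `d` by each `pᵢ`, and the Riemann–Hurwitz identity
`(1 - 1/p₀ - 1/p₁ - 1/p∞) * d = 1` hold iff `(p₀,p₁,p∞,d)` is one of twelve quadruples. -/
theorem stmt3 (p₀ p₁ p_inf d : ℤ) (h0 : 2 ≤ p₀) (h01 : p₀ ≤ p₁) (h1inf : p₁ ≤ p_inf)
    (hd : 1 ≤ d) :
    (1/(p₀:ℚ) + 1/(p₁:ℚ) + 1/(p_inf:ℚ) < 1 ∧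
      p₀ ∣ d ∧ p₁ ∣ d ∧ p_inf ∣ d ∧
      (1 - 1/(p₀:ℚ) - 1/(p₁:ℚ) - 1/(p_inf:ℚ)) * (d:ℚ) = 1) ↔
    ((p₀, p₁, p_inf, d) = (2, 3, 7, 42) ∨ (p₀, p₁, p_inf, d) = (2, 3, 8, 24) ∨
     (p₀, p₁, p_inf, d) = (2, 3, 9, 18) ∨ (p₀, p₁, p_inf, d) = (2, 3, 12, 12) ∨
     (p₀, p₁, p_inf, d) = (2, 4, 5, 20) ∨ (p₀, p₁, p_inf, d) = (2, 4, 6, 12) ∨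
     (p₀, p₁, p_inf, d) = (2, 4, 8, 8) ∨ (p₀, p₁, p_inf, d) = (2, 5, 5, 10) ∨
     (p₀, p₁, p_inf, d) = (2, 6, 6, 6) ∨ (p₀, p₁, p_inf, d) = (3, 3, 4, 12) ∨
     (p₀, p₁, p_inf, d) = (3, 3, 6, 6) ∨ (p₀, p₁, p_inf, d) = (4, 4, 4, 4)) := by
  constructor
  · rintro ⟨hhyp, hdvd0, hdvd1, hdvdi, heq⟩
    have hP0 : (0:ℚ) < (p₀:ℚ) := by exact_mod_cast (by omega : (0:ℤ) < p₀)
    have hP1 : (0:ℚ) < (p₁:ℚ) := by exact_mod_cast (by omega : (0:ℤ) < p₁)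
    have hPi : (0:ℚ) < (p_inf:ℚ) := by exact_mod_cast (by omega : (0:ℤ) < p_inf)
    have hD : (0:ℚ) < (d:ℚ) := by exact_mod_cast (by omega : (0:ℤ) < d)
    have hid : p_inf ≤ d := Int.le_of_dvd (by omega) hdvdi
    -- the key equation as 1 - ... = 1/d
    have hs : 1 - 1/(p₀:ℚ) - 1/(p₁:ℚ) - 1/(p_inf:ℚ) = 1/(d:ℚ) :=
      (eq_div_iff hD.ne').mpr heq
    have hq01 : 1/(p₁:ℚ) ≤ 1/(p₀:ℚ) :=
      one_div_le_one_div_of_le hP0 (by exact_mod_cast h01)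
    have hq1i : 1/(p_inf:ℚ) ≤ 1/(p₁:ℚ) :=
      one_div_le_one_div_of_le hP1 (by exact_mod_cast h1inf)
    have hqid : 1/(d:ℚ) ≤ 1/(p_inf:ℚ) :=
      one_div_le_one_div_of_le hPi (by exact_mod_cast hid)
    have hq0half : 1/(p₀:ℚ) ≤ 1/2 :=
      one_div_le_one_div_of_le (by norm_num) (by exact_mod_cast h0)
    -- bound p₀ ≤ 4
    have hb0 : p₀ ≤ 4 := by
      have h4 : (1:ℚ) ≤ 4 / (p₀:ℚ) := by
        rw [div_eq_mul_one_div]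
        linarith
      have := (one_le_div hP0).mp h4
      exact_mod_cast this
    -- bound p₁ ≤ 6
    have hb1 : p₁ ≤ 6 := by
      have h6 : (1:ℚ) ≤ 6 / (p₁:ℚ) := by
        rw [div_eq_mul_one_div]
        linarith
      have := (one_le_div hP1).mp h6
      exact_mod_cast this
    -- 1/p₀ + 1/p₁ ≤ 5/6
    have hsum : 1/(p₀:ℚ) + 1/(p₁:ℚ) ≤ 5/6 := by
      rcases lt_or_ge p₀ 3 with hc | hc
      · have hp02 : p₀ = 2 := by omega
        have hp13 : 3 ≤ p₁ := by
          by_contra hcon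
          have hp12 : p₁ = 2 := by omega
          rw [hp02, hp12] at hhyp
          have : (0:ℚ) < 1/(p_inf:ℚ) := by positivity
          norm_num at hhyp
          linarith
        have h1 : 1/(p₁:ℚ) ≤ 1/3 :=
          one_div_le_one_div_of_le (by norm_num) (by exact_mod_cast hp13)
        rw [hp02]
        push_cast
        linarith
      · have h1 : 1/(p₀:ℚ) ≤ 1/3 :=
          one_div_le_one_div_of_le (by norm_num) (by exact_mod_cast hc)
        linarith
    -- bound p_inf ≤ 12
    have hbi : p_inf ≤ 12 := by
      have h12 : (1:ℚ) ≤ 12 / (p_inf:ℚ) := by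
        rw [div_eq_mul_one_div]
        linarith
      have := (one_le_div hPi).mp h12
      exact_mod_cast this
    -- integer form of the equation
    have hE : d * (p₀*p₁*p_inf) - d*(p₁*p_inf) - d*(p₀*p_inf) - d*(p₀*p₁) = p₀*p₁*p_inf := by
      have h0' := hP0.ne'
      have h1' := hP1.ne'
      have hi' := hPi.ne'
      field_simp at heq
      have hQ : (d:ℚ) * (p₀*p₁*p_inf) - d*(p₁*p_inf) - d*(p₀*p_inf) - d*(p₀*p₁)
          = p₀*p₁*p_inf := by linear_combination heq
      exact_mod_cast hQ
    clear hs heq hq01 hq1i hqid hq0half hsum hP0 hP1 hPi hD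
    clear hhyp
    interval_cases p₀ <;> interval_cases p₁ <;> interval_cases p_inf <;>
      (simp only [Prod.mk.injEq]; first | omega | (norm_num; omega))
  · rintro (h|h|h|h|h|h|h|h|h|h|h|h) <;>
      (simp only [Prod.mk.injEq] at h; obtain ⟨rfl, rfl, rfl, rfl⟩ := h) <;>
      norm_num
end

section
/- Let g ≥ 0 and n ≥ 0 be integers with (g, n) ≠ (0, 3), let p₁ ≤ p₂ ≤ … ≤ pₙ be integers each ≥ 2, and let d ≥ 1 be an integer divisible by each pᵢ. Then (2g − 2 + Σᵢ₌₁ⁿ (1 − 1/pᵢ))·d = 1 (as rational numbers) holds if and only if the data (g; p₁,…,pₙ; d) is one of the following four: (0; 2,2,2,3; 6), (0; 2,2,2,4; 4), (0; 2,2,2,2,2; 2), (1; 2; 2). -/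
/-!
Moving everything to one side, the identity says that the reciprocals of `p₁, …, pₙ` and of `d`
add up to the integer `N = 2g - 2 + n`. These `n + 1` numbers are all at least `2` (for `d`
because `p₁ ∣ d`; the case `n = 0` dies by parity), so `0 < N ≤ (n + 1) / 2`. Apart from the
excluded `(g, n) = (0, 3)` this leaves `4g + n = 5`, where the bound is attained and every
number is `2`, and `(g, n) = (0, 4)`, where `1/p₁ + ⋯ + 1/p₄ + 1/d = 2` is solved by hand
using `p₄ ≤ d` and `p₁ ∣ d`.
-/

def invSum (l : List ℕ) : ℚ := (l.map fun q => (q : ℚ)⁻¹).sum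

@[simp] lemma invSum_nil : invSum [] = 0 := rfl

@[simp] lemma invSum_cons (a : ℕ) (l : List ℕ) : invSum (a :: l) = (a : ℚ)⁻¹ + invSum l :=
  List.sum_cons

@[simp] lemma invSum_append (l l' : List ℕ) : invSum (l ++ l') = invSum l + invSum l' := by
  simp [invSum]

lemma invSum_pos {l : List ℕ} (hl : l ≠ []) (h : ∀ q ∈ l, 0 < q) : 0 < invSum l :=
  List.sum_pos _ (by simpa using h) (by simpa [List.eq_nil_iff_forall_not_mem] using hl)

lemma invSum_le_length_div_two {l : List ℕ} (h : ∀ q ∈ l, 2 ≤ q) : invSum l ≤ l.length / 2 := by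
  induction l with
  | nil => simp
  | cons a l ih =>
    simp only [List.forall_mem_cons] at h
    have ha : (a : ℚ)⁻¹ ≤ 2⁻¹ := inv_anti₀ two_pos (by exact_mod_cast h.1)
    have hl := ih h.2
    simp only [invSum_cons, List.length_cons]
    push_cast
    linarith

lemma eq_two_of_invSum_eq_length_div_two {l : List ℕ} (h : ∀ q ∈ l, 2 ≤ q)
    (hs : invSum l = l.length / 2) : ∀ q ∈ l, q = 2 := by
  induction l with
  | nil => simp
  | cons a l ih =>
    simp only [List.forall_mem_cons] at h ⊢
    have ha : (a : ℚ)⁻¹ ≤ 2⁻¹ := inv_anti₀ two_pos (by exact_mod_cast h.1)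
    have hl := invSum_le_length_div_two h.2
    simp only [invSum_cons, List.length_cons] at hs
    push_cast at hs
    have ha' : (a : ℚ)⁻¹ = 2⁻¹ := by linarith
    exact ⟨by exact_mod_cast inv_injective ha', ih h.2 (by linarith)⟩

lemma natCast_inv_le_inv {k x : ℕ} (hk : 0 < k) (h : k ≤ x) : (x : ℚ)⁻¹ ≤ (k : ℚ)⁻¹ :=
  inv_anti₀ (by exact_mod_cast hk) (by exact_mod_cast h)

lemma invSum_eq_two_cases {a b c e d : ℕ} (hab : a ≤ b) (hbc : b ≤ c) (hce : c ≤ e)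
    (ha : 2 ≤ a) (had : a ∣ d) (hed : e ∣ d) (hd : d ≠ 0) (h : invSum [a, b, c, e, d] = 2) :
    a = 2 ∧ b = 2 ∧ c = 2 ∧ (e = 3 ∧ d = 6 ∨ e = 4 ∧ d = 4) := by
  have hed : e ≤ d := Nat.le_of_dvd (Nat.pos_of_ne_zero hd) hed
  simp only [invSum_cons, invSum_nil, add_zero] at h
  have hb := natCast_inv_le_inv (k := 2) two_pos (ha.trans hab)
  have hc : c = 2 := by
    by_contra hc
    have h3 (x : ℕ) (hx : c ≤ x) := natCast_inv_le_inv (k := 3) three_pos (by omega : 3 ≤ x)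
    have hc3 := h3 c le_rfl
    have he3 := h3 e hce
    have hd3 := h3 d (hce.trans hed)
    -- with `c ≥ 3` the equation forces `a = 2`, hence `2 ∣ d` and `d ≥ 4`
    have ha2 : a = 2 := by
      by_contra ha2
      have := natCast_inv_le_inv (k := 3) three_pos (by omega : 3 ≤ a)
      push_cast at *
      linarith
    subst ha2
    have hd4 := natCast_inv_le_inv (k := 4) four_pos
      (by obtain ⟨m, rfl⟩ := had; omega : 4 ≤ d)
    push_cast at *
    linarith
  obtain rfl : a = 2 := by omega
  obtain rfl : b = 2 := by omega
  subst hc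
  have he : e ≤ 4 := by
    by_contra he
    have := natCast_inv_le_inv (k := 5) (by norm_num) (by omega : 5 ≤ e)
    have := natCast_inv_le_inv (k := 5) (by norm_num) (by omega : 5 ≤ d)
    push_cast at *
    linarith
  have hd' : (d : ℚ) ≠ 0 := by exact_mod_cast hd
  refine ⟨rfl, rfl, rfl, ?_⟩
  interval_cases e
  · push_cast at h
    exact absurd (by linarith) (inv_ne_zero hd')
  · push_cast at h
    field_simp at h
    exact Or.inl ⟨rfl, by exact_mod_cast (by linarith : (d : ℚ) = 6)⟩
  · push_cast at h
    field_simp at h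
    exact Or.inr ⟨rfl, by exact_mod_cast (by linarith : (d : ℚ) = 4)⟩

/-- The statement's sum runs over `l` coerced to `List ℚ`, i.e. over `l >>= fun a => pure ↑a`. -/
lemma sum_map_one_sub_one_div (l : List ℕ) :
    (l.map fun q => 1 - 1 / (q : ℚ)).sum = l.length - invSum l := by
  induction l with
  | nil => simp
  | cons a l ih =>
    simp only [List.pure_def, List.bind_eq_flatMap, List.flatMap_cons, List.map_append,
      List.sum_append, List.map_cons, List.map_nil, List.sum_cons, List.sum_nil, ih,
      invSum_cons, List.length_cons] at *
    push_cast
    ring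

section RiemannHurwitz

variable {g d : ℕ} {p : List ℕ}

lemma riemannHurwitz_iff_invSum_append (hd : d ≠ 0) :
    (2 * (g : ℚ) - 2 + (p.length - invSum p)) * d = 1 ↔
      invSum (p ++ [d]) = 2 * g - 2 + p.length := by
  have hd' : (d : ℚ) ≠ 0 := by exact_mod_cast hd
  rw [invSum_append, invSum_cons, invSum_nil, add_zero, ← eq_div_iff hd', one_div]
  constructor <;> intro h <;> linarith

lemma ne_nil_of_invSum_append_eq (hd : d ≠ 0) (h : invSum (p ++ [d]) = 2 * g - 2 + p.length) :
    p ≠ [] := by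
  rintro rfl
  simp only [List.nil_append, invSum_cons, invSum_nil, add_zero, List.length_nil,
    Nat.cast_zero] at h
  have hpos : (0 : ℚ) < 2 * g - 2 := h ▸ inv_pos.2 (by exact_mod_cast Nat.pos_of_ne_zero hd)
  have hle : (2 * g - 2 : ℚ) ≤ 1 := h ▸ Nat.cast_inv_le_one d
  have h1 : 2 < 2 * g := by exact_mod_cast (by linarith : (2 : ℚ) < 2 * g)
  have h2 : 2 * g ≤ 3 := by exact_mod_cast (by linarith : (2 * g : ℚ) ≤ 3)
  omega

lemma genus_length_bounds (hL : ∀ q ∈ p ++ [d], 2 ≤ q)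
    (h : invSum (p ++ [d]) = 2 * g - 2 + p.length) :
    2 < 2 * g + p.length ∧ 4 * g + p.length ≤ 5 := by
  have hpos := invSum_pos (by simp) fun q hq => (hL q hq).trans_lt' two_pos
  have hle := invSum_le_length_div_two hL
  rw [h] at hpos hle
  rw [List.length_append, List.length_singleton] at hle
  push_cast at hle
  constructor
  · exact_mod_cast (by linarith : (2 : ℚ) < 2 * g + p.length)
  · exact_mod_cast (by linarith : (4 * g + p.length : ℚ) ≤ 5)

lemma eq_replicate_two_of_invSum_append_eq (hL : ∀ q ∈ p ++ [d], 2 ≤ q)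
    (h : invSum (p ++ [d]) = 2 * g - 2 + p.length) (hextr : 4 * g + p.length = 5) :
    p = List.replicate p.length 2 ∧ d = 2 := by
  have hextr' : (4 * g + p.length : ℚ) = 5 := by exact_mod_cast hextr
  have h2 := eq_two_of_invSum_eq_length_div_two hL (by
    rw [h, List.length_append, List.length_singleton]
    push_cast
    linarith)
  exact ⟨List.eq_replicate_iff.2 ⟨rfl, fun q hq => h2 q (List.mem_append_left _ hq)⟩,
    h2 d (by simp)⟩

end RiemannHurwitz

theorem stmt4_general (g : ℕ) (p : List ℕ) (d : ℕ)
    (hne : ¬(g = 0 ∧ p.length = 3))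
    (hsorted : p.Pairwise (· ≤ ·))
    (hp2 : ∀ q ∈ p, 2 ≤ q)
    (hdvd : ∀ q ∈ p, q ∣ d) :
    ((2 * (g:ℚ) - 2 + (p.map fun q => 1 - 1/(q:ℚ)).sum) * (d:ℚ) = 1) ↔
    ((g = 0 ∧ p = [2, 2, 2, 3] ∧ d = 6) ∨
     (g = 0 ∧ p = [2, 2, 2, 4] ∧ d = 4) ∨
     (g = 0 ∧ p = [2, 2, 2, 2, 2] ∧ d = 2) ∨
     (g = 1 ∧ p = [2] ∧ d = 2)) := by
  rw [sum_map_one_sub_one_div]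
  refine ⟨fun h => ?_, by
    rintro (⟨rfl, rfl, rfl⟩ | ⟨rfl, rfl, rfl⟩ | ⟨rfl, rfl, rfl⟩ | ⟨rfl, rfl, rfl⟩) <;> norm_num⟩
  have hd : d ≠ 0 := by rintro rfl; simp at h
  rw [riemannHurwitz_iff_invSum_append hd] at h
  obtain ⟨q, hq⟩ := List.exists_mem_of_ne_nil p (ne_nil_of_invSum_append_eq hd h)
  have hd2 : 2 ≤ d := (hp2 q hq).trans (Nat.le_of_dvd (Nat.pos_of_ne_zero hd) (hdvd q hq))
  have hL : ∀ q ∈ p ++ [d], 2 ≤ q := by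
    simp only [List.mem_append, List.mem_singleton]
    rintro q (hq | rfl)
    exacts [hp2 q hq, hd2]
  obtain ⟨hlow, hhigh⟩ := genus_length_bounds hL h
  by_cases hextr : 4 * g + p.length = 5
  · obtain ⟨hp, rfl⟩ := eq_replicate_two_of_invSum_append_eq hL h hextr
    obtain ⟨rfl, hn⟩ | ⟨rfl, hn⟩ : g = 0 ∧ p.length = 5 ∨ g = 1 ∧ p.length = 1 := by omega
    all_goals rw [hn] at hp; simp [hp]
  · obtain ⟨a, b, c, e, rfl⟩ := List.length_eq_four.1 (by omega : p.length = 4)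
    obtain rfl : g = 0 := by omega
    simp only [List.pairwise_cons, List.mem_cons, List.not_mem_nil, forall_eq_or_imp,
      forall_eq, or_false, IsEmpty.forall_iff, implies_true, and_true,
      List.Pairwise.nil] at hsorted
    obtain ⟨rfl, rfl, rfl, he⟩ := invSum_eq_two_cases hsorted.1.1 hsorted.2.1.1 hsorted.2.2
      (hp2 a (by simp)) (hdvd a (by simp)) (hdvd e (by simp)) hd (h.trans (by norm_num))
    rcases he with ⟨rfl, rfl⟩ | ⟨rfl, rfl⟩ <;> simp

/-- Table 2 of the paper (non-hypergeometric case): for a genus `g ≥ 0`, a sorted list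
`p = [p₁, …, pₙ]` of orbifold orders `pᵢ ≥ 2` (with `(g, n) ≠ (0, 3)`), and a degree `d ≥ 1`
divisible by each `pᵢ`, the Riemann–Hurwitz identity `(2g - 2 + Σ (1 - 1/pᵢ)) * d = 1`
holds iff the data is one of `(0; 2,2,2,3; 6)`, `(0; 2,2,2,4; 4)`, `(0; 2,2,2,2,2; 2)`,
`(1; 2; 2)`. -/
theorem stmt4 (g : ℕ) (p : List ℕ) (d : ℕ)
    (hne : ¬(g = 0 ∧ p.length = 3))
    (hsorted : p.Pairwise (· ≤ ·))
    (hp2 : ∀ q ∈ p, 2 ≤ q)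
    (hd : 1 ≤ d)
    (hdvd : ∀ q ∈ p, q ∣ d) :
    ((2 * (g:ℚ) - 2 + (p.map fun q => 1 - 1/(q:ℚ)).sum) * (d:ℚ) = 1) ↔
    ((g = 0 ∧ p = [2, 2, 2, 3] ∧ d = 6) ∨
     (g = 0 ∧ p = [2, 2, 2, 4] ∧ d = 4) ∨
     (g = 0 ∧ p = [2, 2, 2, 2, 2] ∧ d = 2) ∨
     (g = 1 ∧ p = [2] ∧ d = 2)) :=
  stmt4_general g p d hne hsorted hp2 hdvd
end

section
/- There exist permutations σ₀, σ₁, σ∞, σ_t of a set with 4 elements such that: σ₀, σ₁ and σ∞ are each a single 4-cycle (cycle type {4}); σ_t is a transposition (cycle type {2}); the composition σ₀ ∘ σ₁ ∘ σ∞ ∘ σ_t is the identity; and the subgroup generated by σ₀, σ₁, σ∞ acts transitively on the 4 points. (For instance σ₀ = (1234), σ₁ = (1324), σ∞ = (1342), σ_t = (12).) -/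
/-- Existence of permutations encoding a degree 4 branched covering of the projective line
realizing the Hurwitz data (4,4,4) of the paper, with one free simple branch point:
cycle types of σ₀, σ₁, σ∞ are as prescribed, σ_t is a transposition, the composition
σ₀ ∘ σ₁ ∘ σ∞ ∘ σ_t is the identity, and ⟨σ₀, σ₁, σ∞⟩ is transitive on the 4 points. -/
theorem stmt6 :
    ∃ σ₀ σ₁ σ_inf σ_t : Equiv.Perm (Fin 4),
      σ₀.cycleType = {4} ∧
      σ₁.cycleType = {4} ∧
      σ_inf.cycleType = {4} ∧
      σ_t.cycleType = {2} ∧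
      σ₀ * σ₁ * σ_inf * σ_t = 1 ∧
      ∀ i j : Fin 4, ∃ g ∈ Subgroup.closure ({σ₀, σ₁, σ_inf} : Set (Equiv.Perm (Fin 4))),
        g i = j := by
  refine ⟨c[0,1,2,3], c[0,1,2,3], c[0,3,1,2], c[0,1], by decide, by decide, by decide,
    by decide, by decide, ?_⟩
  have h : (c[0,1,2,3] : Equiv.Perm (Fin 4)) ∈
      Subgroup.closure ({c[0,1,2,3], c[0,1,2,3], c[0,3,1,2]} : Set (Equiv.Perm (Fin 4))) :=
    Subgroup.subset_closure (by simp)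
  intro i j
  fin_cases i <;> fin_cases j
  all_goals first
    | exact ⟨_, pow_mem h 0, by decide⟩
    | exact ⟨_, pow_mem h 1, by decide⟩
    | exact ⟨_, pow_mem h 2, by decide⟩
    | exact ⟨_, pow_mem h 3, by decide⟩
end

section
/- There exist permutations σ₀, σ₁, σ∞, σ_t of a set with 18 elements such that: σ₀ is a product of 9 disjoint transpositions (cycle type consisting of nine 2's); σ₁ is a product of 6 disjoint 3-cycles (cycle type consisting of six 3's); σ∞ is a product of 2 disjoint 9-cycles (cycle type {9,9}); σ_t is a transposition (cycle type {2}); the composition σ₀ ∘ σ₁ ∘ σ∞ ∘ σ_t is the identity; and the subgroup generated by σ₀, σ₁, σ∞ acts transitively on the 18 points. -/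
/-!
The witness: `σ_inf = (0 … 8)(9 … 17)`, and `σ₀`, `σ₁` are products of disjoint cycles chosen so
that `σ₀ σ₁ σ_inf` is the transposition `(14 15)`, whose inverse is `σ_t`. Transitivity comes
from the two `σ_inf`-orbits being linked by `σ₀ 1 = 14`.
-/

open Equiv Equiv.Perm

theorem List.card_support_formPerm {α : Type*} [DecidableEq α] [Fintype α] {l : List α}
    (hl : l.Nodup) (hn : 2 ≤ l.length) : l.formPerm.support.card = l.length := by
  rw [support_formPerm_of_nodup l hl (by rintro x rfl; simp at hn), toFinset_card_of_nodup hl]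

theorem Equiv.Perm.exists_mem_apply_eq_of_forall_exists_apply_eq {α : Type*}
    {H : Subgroup (Perm α)} (x : α) (h : ∀ y, ∃ g ∈ H, g x = y) (i j : α) :
    ∃ g ∈ H, g i = j := by
  have : MulAction.IsPretransitive H α := (MulAction.isPretransitive_iff_base x).mpr fun y ↦ by
    obtain ⟨g, hg, rfl⟩ := h y
    exact ⟨⟨g, hg⟩, rfl⟩
  obtain ⟨⟨g, hg⟩, hgij⟩ := MulAction.exists_smul_eq H i j
  exact ⟨g, hg, hgij⟩

namespace Equiv.Perm

variable {α : Type*} [DecidableEq α]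

def ofCycles (L : List (List α)) : Perm α :=
  (L.map List.formPerm).prod

theorem cycleType_ofCycles [Fintype α] {L : List (List α)} (hL : L.flatten.Nodup)
    (hlen : ∀ l ∈ L, 2 ≤ l.length) :
    (ofCycles L).cycleType = L.map List.length := by
  obtain ⟨hnodup, hdisj⟩ := List.nodup_flatten.mp hL
  rw [ofCycles, cycleType_eq _ rfl, List.map_map]
  · exact congrArg _ <| List.map_congr_left fun l hl ↦
      List.card_support_formPerm (hnodup l hl) (hlen l hl)
  · simpa using fun l hl ↦ List.isCycle_formPerm (hnodup l hl) (hlen l hl)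
  · rw [List.pairwise_map]
    refine hdisj.imp_of_mem fun hl hl' h ↦ ?_
    rwa [List.formPerm_disjoint_iff (hnodup _ hl) (hnodup _ hl') (hlen _ hl) (hlen _ hl')]

end Equiv.Perm

namespace Hurwitz239

def σ₀ : Perm (Fin 18) :=
  ofCycles [[0, 5], [1, 14], [2, 7], [3, 11], [4, 16], [6, 12], [8, 13], [9, 15], [10, 17]]

def σ₁ : Perm (Fin 18) :=
  ofCycles [[0, 13, 6], [1, 5, 16], [2, 14, 8], [3, 7, 12], [4, 11, 17], [9, 10, 15]]

def σ_inf : Perm (Fin 18) :=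
  ofCycles [[0, 1, 2, 3, 4, 5, 6, 7, 8], [9, 10, 11, 12, 13, 14, 15, 16, 17]]

def σ_t : Perm (Fin 18) := ofCycles [[15, 14]]

theorem cycleType_σ₀ : σ₀.cycleType = Multiset.replicate 9 2 :=
  cycleType_ofCycles (by decide) (by decide)

theorem cycleType_σ₁ : σ₁.cycleType = Multiset.replicate 6 3 :=
  cycleType_ofCycles (by decide) (by decide)

theorem cycleType_σ_inf : σ_inf.cycleType = {9, 9} :=
  cycleType_ofCycles (by decide) (by decide)

theorem cycleType_σ_t : σ_t.cycleType = {2} :=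
  cycleType_ofCycles (by decide) (by decide)

set_option maxRecDepth 20000 in
theorem σ₀_mul_σ₁_mul_σ_inf_mul_σ_t : σ₀ * σ₁ * σ_inf * σ_t = 1 := by
  decide

set_option maxRecDepth 20000 in
theorem exists_pow_apply_eq_or_pow_mul_apply_eq (y : Fin 18) :
    ∃ k : Fin 9, (σ_inf ^ (k : ℕ)) 0 = y ∨ (σ_inf ^ (k : ℕ) * σ₀ * σ_inf) 0 = y := by
  revert y
  decide

end Hurwitz239

open Hurwitz239 in
/-- Existence of permutations encoding a degree 18 branched covering of the projective line
realizing the Hurwitz data (2,3,9) of the paper, with one free simple branch point: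
cycle types of σ₀, σ₁, σ∞ are as prescribed, σ_t is a transposition, the composition
σ₀ ∘ σ₁ ∘ σ∞ ∘ σ_t is the identity, and ⟨σ₀, σ₁, σ∞⟩ is transitive on the 18 points. -/
theorem stmt13 :
    ∃ σ₀ σ₁ σ_inf σ_t : Equiv.Perm (Fin 18),
      σ₀.cycleType = (Multiset.replicate 9 2) ∧
      σ₁.cycleType = (Multiset.replicate 6 3) ∧
      σ_inf.cycleType = {9, 9} ∧
      σ_t.cycleType = {2} ∧
      σ₀ * σ₁ * σ_inf * σ_t = 1 ∧
      ∀ i j : Fin 18, ∃ g ∈ Subgroup.closure ({σ₀, σ₁, σ_inf} : Set (Equiv.Perm (Fin 18))),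
        g i = j := by
  refine ⟨σ₀, σ₁, σ_inf, σ_t, cycleType_σ₀, cycleType_σ₁, cycleType_σ_inf, cycleType_σ_t,
    σ₀_mul_σ₁_mul_σ_inf_mul_σ_t, exists_mem_apply_eq_of_forall_exists_apply_eq 0 fun y ↦ ?_⟩
  have h₀ : σ₀ ∈ Subgroup.closure {σ₀, σ₁, σ_inf} := Subgroup.subset_closure (by simp)
  have h_inf : σ_inf ∈ Subgroup.closure {σ₀, σ₁, σ_inf} := Subgroup.subset_closure (by simp)
  obtain ⟨k, hk | hk⟩ := exists_pow_apply_eq_or_pow_mul_apply_eq y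
  · exact ⟨_, pow_mem h_inf k, hk⟩
  · exact ⟨_, mul_mem (mul_mem (pow_mem h_inf k) h₀) h_inf, hk⟩
end

section
/- There exist permutations σ₀, σ₁, σ∞, σ_t of a set with 12 elements such that: σ₀ and σ₁ are each a product of 4 disjoint 3-cycles (cycle type {3,3,3,3}); σ∞ is a product of 3 disjoint 4-cycles (cycle type {4,4,4}); σ_t is a transposition (cycle type {2}); the composition σ₀ ∘ σ₁ ∘ σ∞ ∘ σ_t is the identity; and the subgroup generated by σ₀, σ₁, σ∞ acts transitively on the 12 points. -/
/-!
All witnesses are explicit. The cycle types are read off lists of disjoint cycles, the relation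
`σ₀ σ₁ σ∞ σ_t = 1` is a finite computation, and transitivity holds because the points reachable
from `0` in at most three steps along the generators already exhaust `Fin 12`.
-/

open Equiv Equiv.Perm MulAction

namespace Equiv.Perm

variable {α : Type*} [DecidableEq α]

theorem cycleType_prod_map_formPerm [Fintype α] (L : List (List α)) (hL : L.flatten.Nodup)
    (hlength : ∀ l ∈ L, 2 ≤ l.length) :
    (L.map List.formPerm).prod.cycleType = L.map List.length := by
  obtain ⟨hnodup, hdisj⟩ := List.nodup_flatten.mp hL
  rw [cycleType_eq (L.map List.formPerm) rfl, List.map_map]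
  · congr 1
    refine List.map_congr_left fun l hl => ?_
    have hsingleton : ∀ x, l ≠ [x] := by
      rintro x rfl
      simpa using hlength _ hl
    rw [Function.comp_apply, Function.comp_apply, List.support_formPerm_of_nodup l (hnodup l hl) hsingleton,
      List.toFinset_card_of_nodup (hnodup l hl)]
  · simp only [List.mem_map]
    rintro _ ⟨l, hl, rfl⟩
    exact List.isCycle_formPerm (hnodup l hl) (hlength l hl)
  · refine List.pairwise_map.mpr (hdisj.imp_of_mem fun hl hl' h => ?_)
    exact (List.formPerm_disjoint_iff (hnodup _ hl) (hnodup _ hl') (hlength _ hl)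
      (hlength _ hl')).mpr h

def reachableWithin (S : Finset (Perm α)) (a : α) : ℕ → Finset α
  | 0 => {a}
  | n + 1 => reachableWithin S a n ∪ S.biUnion fun s => (reachableWithin S a n).image s

theorem reachableWithin_subset_orbit (S : Finset (Perm α)) (a : α) (n : ℕ) :
    ↑(reachableWithin S a n) ⊆ orbit (Subgroup.closure (S : Set (Perm α))) a := by
  induction n with
  | zero => simp [reachableWithin, mem_orbit_self]
  | succ n ih =>
    intro x hx
    simp only [reachableWithin, Finset.coe_union, Finset.coe_biUnion, Finset.coe_image,
      Set.mem_union, Set.mem_iUnion, Set.mem_image] at hx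
    obtain hx | ⟨s, hs, y, hy, rfl⟩ := hx
    · exact ih hx
    · obtain ⟨g, rfl⟩ := ih hy
      exact ⟨⟨s, Subgroup.subset_closure hs⟩ * g, mul_smul _ _ _⟩

theorem isPretransitive_closure_of_reachableWithin_eq_univ [Fintype α] (S : Finset (Perm α))
    (a : α) (n : ℕ) (h : reachableWithin S a n = Finset.univ) :
    IsPretransitive (Subgroup.closure (S : Set (Perm α))) α :=
  (isPretransitive_iff_orbit_eq_univ a).mpr <|
    Set.eq_univ_of_univ_subset (by simpa [h] using reachableWithin_subset_orbit S a n)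

end Equiv.Perm

namespace Hurwitz334

def sigma0 : Perm (Fin 12) :=
  ([[0, 9, 11], [1, 10, 4], [2, 8, 5], [3, 7, 6]].map List.formPerm).prod

def sigma1 : Perm (Fin 12) :=
  ([[0, 7, 5], [1, 6, 4], [2, 10, 9], [3, 11, 8]].map List.formPerm).prod

def sigmaInf : Perm (Fin 12) :=
  ([[0, 3, 1, 6], [2, 7, 10, 4], [5, 11, 8, 9]].map List.formPerm).prod

theorem cycleType_sigma0 : sigma0.cycleType = Multiset.replicate 4 3 := by
  rw [sigma0, cycleType_prod_map_formPerm _ (by decide) (by decide)]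
  rfl

theorem cycleType_sigma1 : sigma1.cycleType = Multiset.replicate 4 3 := by
  rw [sigma1, cycleType_prod_map_formPerm _ (by decide) (by decide)]
  rfl

theorem cycleType_sigmaInf : sigmaInf.cycleType = {4, 4, 4} := by
  rw [sigmaInf, cycleType_prod_map_formPerm _ (by decide) (by decide)]
  rfl

set_option maxRecDepth 10000 in
theorem sigma0_mul_sigma1_mul_sigmaInf_mul_swap : sigma0 * sigma1 * sigmaInf * swap 7 11 = 1 := by
  decide

set_option maxRecDepth 10000 in
theorem reachableWithin_generators : reachableWithin {sigma0, sigma1, sigmaInf} 0 3 = .univ := by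
  decide

end Hurwitz334

open Hurwitz334

/-- Existence of permutations encoding a degree 12 branched covering of the projective line
realizing the Hurwitz data (3,3,4) of the paper, with one free simple branch point:
cycle types of σ₀, σ₁, σ∞ are as prescribed, σ_t is a transposition, the composition
σ₀ ∘ σ₁ ∘ σ∞ ∘ σ_t is the identity, and ⟨σ₀, σ₁, σ∞⟩ is transitive on the 12 points. -/
theorem stmt14 :
    ∃ σ₀ σ₁ σ_inf σ_t : Equiv.Perm (Fin 12),
      σ₀.cycleType = (Multiset.replicate 4 3) ∧
      σ₁.cycleType = (Multiset.replicate 4 3) ∧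
      σ_inf.cycleType = {4, 4, 4} ∧
      σ_t.cycleType = {2} ∧
      σ₀ * σ₁ * σ_inf * σ_t = 1 ∧
      ∀ i j : Fin 12, ∃ g ∈ Subgroup.closure ({σ₀, σ₁, σ_inf} : Set (Equiv.Perm (Fin 12))),
        g i = j := by
  refine ⟨sigma0, sigma1, sigmaInf, swap 7 11, cycleType_sigma0, cycleType_sigma1,
    cycleType_sigmaInf, isSwap_iff_cycleType.mp ⟨7, 11, by decide, rfl⟩,
    sigma0_mul_sigma1_mul_sigmaInf_mul_swap, fun i j => ?_⟩
  have := isPretransitive_closure_of_reachableWithin_eq_univ _ _ _ reachableWithin_generators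
  rw [Finset.coe_insert, Finset.coe_insert, Finset.coe_singleton] at this
  obtain ⟨g, hg⟩ := exists_smul_eq (Subgroup.closure {sigma0, sigma1, sigmaInf}) i j
  exact ⟨g, g.2, hg⟩
end
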